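/- arXiv:1105.1768 — 3 statements merged into one kernel-verified Lean document; each statement's English description precedes it below -/
import Mathlib

section
/- Let π : G → H be a surjective Hopf algebra map, with homogeneous right H-coaction Δ_R = (id ⊗ π)∘Δ on G and coinvariant subalgebra M = G^{co H}. Define v : G ⊗ G → G ⊗_M G by v(f ⊗ g) = f·S(g₍₁₎) ⊗ g₍₂₎, and ver : G ⊗_M G → G ⊗ H by ver(f ⊗ g) = f·g₍₁₎ ⊗ π(g₍₂₎). If v(1 ⊗ p) = 0 for all p ∈ ker(π), then ver is bijective (i.e., G is a Hopf–Galois extension of M). -/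
open TensorProduct

variable (G H : Type*) [Ring G] [HopfAlgebra ℂ G] [Ring H] [HopfAlgebra ℂ H]

/-- The coinvariant subalgebra `M = G^{co H}` of the homogeneous right `H`-coaction
`Δ_R = (id ⊗ π) ∘ Δ` on `G`. -/
noncomputable def coinv (π : G →ₐc[ℂ] H) : Set G :=
  {f : G | (LinearMap.lTensor G (π : G →ₗ[ℂ] H)) (Coalgebra.comul f) = f ⊗ₜ[ℂ] (1 : H)}

/-- The subspace of `G ⊗ G` spanned by the relations `fm ⊗ g − f ⊗ mg` (`m ∈ M`) which
define the tensor product `G ⊗_M G` over the coinvariant subalgebra. -/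
noncomputable def relSub (π : G →ₐc[ℂ] H) : Submodule ℂ (G ⊗[ℂ] G) :=
  Submodule.span ℂ {x : G ⊗[ℂ] G | ∃ f g m : G, m ∈ coinv G H π ∧
    x = (f * m) ⊗ₜ[ℂ] g - f ⊗ₜ[ℂ] (m * g)}

/-- `G ⊗_M G`, realised as the quotient of `G ⊗ G` by the relations over `M`. -/
abbrev GtensorMG (π : G →ₐc[ℂ] H) := (G ⊗[ℂ] G) ⧸ relSub G H π

/-- The map `v : G ⊗ G → G ⊗_M G`, `f ⊗ g ↦ f·S(g₍₁₎) ⊗ g₍₂₎`. -/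
noncomputable def vMap (π : G →ₐc[ℂ] H) : G ⊗[ℂ] G →ₗ[ℂ] GtensorMG G H π :=
  (relSub G H π).mkQ ∘ₗ
    (LinearMap.rTensor G (LinearMap.mul' ℂ G)) ∘ₗ
      (TensorProduct.assoc ℂ G G G).symm.toLinearMap ∘ₗ
        (LinearMap.lTensor G
          ((LinearMap.rTensor G (HopfAlgebra.antipode (R := ℂ))) ∘ₗ Coalgebra.comul))

/-- The map `G ⊗ G → G ⊗ H`, `f ⊗ g ↦ f·g₍₁₎ ⊗ π(g₍₂₎)`, whose descent to `G ⊗_M G`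
is the canonical map `ver`. -/
noncomputable def verPre (π : G →ₐc[ℂ] H) : G ⊗[ℂ] G →ₗ[ℂ] G ⊗[ℂ] H :=
  (LinearMap.lTensor G (π : G →ₗ[ℂ] H)) ∘ₗ
    (LinearMap.rTensor G (LinearMap.mul' ℂ G)) ∘ₗ
      (TensorProduct.assoc ℂ G G G).symm.toLinearMap ∘ₗ
        (LinearMap.lTensor G Coalgebra.comul)

/-!
Write `twistMap φ (a ⊗ b) = a φ(b₍₁₎) ⊗ b₍₂₎`. Coassociativity gives
`twistMap φ ∘ twistMap ψ = twistMap (ψ ⋆ φ)` for the convolution product, so `twistMap id` and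
`twistMap S` are mutually inverse. Since `verPre = (id ⊗ π) ∘ twistMap id` and
`v = mkQ ∘ twistMap S`, we get `ver ∘ v = id ⊗ π`, a left inverse of `id ⊗ i` for any linear
section `i` of `π`. Conversely `v ∘ (id ⊗ i) ∘ ver` is induced by `v ∘ (id ⊗ iπ) ∘ twistMap id`,
and `v ∘ (id ⊗ iπ) = v` because `b - iπ(b) ∈ ker π` and the hypothesis spreads to
`v(a ⊗ p) = 0` by left `G`-linearity of `twistMap S` and of the relations of `G ⊗_M G`.
`verPre` descends to `G ⊗_M G` because the coaction `(id ⊗ π) ∘ Δ` is multiplicative and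
fixes `M`.
-/

open Coalgebra WithConv

section Twist

variable {R A : Type*} [CommSemiring R] [Semiring A] [Algebra R A]

lemma rTensor_mul'_assoc_symm_tmul (a : A) (x : A ⊗[R] A) :
    LinearMap.rTensor A (LinearMap.mul' R A) ((TensorProduct.assoc R A A A).symm (a ⊗ₜ x)) =
      (a ⊗ₜ 1) * x := by
  induction x using TensorProduct.induction_on with
  | zero => simp
  | tmul x y => simp
  | add x y hx hy => simp_all [tmul_add, mul_add]

variable [Coalgebra R A]

noncomputable def twistMap (φ : A →ₗ[R] A) : A ⊗[R] A →ₗ[R] A ⊗[R] A :=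
  LinearMap.rTensor A (LinearMap.mul' R A) ∘ₗ (TensorProduct.assoc R A A A).symm.toLinearMap ∘ₗ
    LinearMap.lTensor A (LinearMap.rTensor A φ ∘ₗ comul)

lemma twistMap_tmul (φ : A →ₗ[R] A) (a b : A) :
    twistMap φ (a ⊗ₜ b) = (a ⊗ₜ 1) * LinearMap.rTensor A φ (comul b) :=
  rTensor_mul'_assoc_symm_tmul a _

lemma twistMap_tmul_one_mul (φ : A →ₗ[R] A) (a : A) (x : A ⊗[R] A) :
    twistMap φ ((a ⊗ₜ 1) * x) = (a ⊗ₜ 1) * twistMap φ x := by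
  induction x using TensorProduct.induction_on with
  | zero => simp
  | tmul x y =>
    rw [Algebra.TensorProduct.tmul_mul_tmul, one_mul, twistMap_tmul, twistMap_tmul,
      ← one_mul (1 : A), ← Algebra.TensorProduct.tmul_mul_tmul, one_mul, mul_assoc]
  | add x y hx hy => simp_all [mul_add]

lemma twistMap_comp_rTensor_comul (φ ψ : A →ₗ[R] A) :
    twistMap φ ∘ₗ LinearMap.rTensor A ψ ∘ₗ comul =
      LinearMap.rTensor A (toConv ψ * toConv φ).ofConv ∘ₗ comul := by
  simp only [twistMap, LinearMap.convMul_def, coassoc_simps]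

lemma twistMap_comp (φ ψ : A →ₗ[R] A) :
    twistMap φ ∘ₗ twistMap ψ = twistMap (toConv ψ * toConv φ).ofConv := by
  ext a b
  simp only [AlgebraTensorModule.curry_apply, curry_apply, LinearMap.coe_restrictScalars,
    LinearMap.comp_apply, twistMap_tmul, twistMap_tmul_one_mul]
  exact congrArg _ (LinearMap.congr_fun (twistMap_comp_rTensor_comul φ ψ) b)

lemma twistMap_convOne : twistMap (1 : WithConv (A →ₗ[R] A)).ofConv = LinearMap.id := by
  ext a b
  simp [twistMap_tmul, LinearMap.convOne_def, LinearMap.rTensor_comp_apply, rTensor_counit_comul]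

end Twist

section Antipode

variable {R A : Type*} [CommSemiring R] [Semiring A] [HopfAlgebra R A]

lemma twistMap_id_comp_twistMap_antipode :
    twistMap LinearMap.id ∘ₗ twistMap (HopfAlgebra.antipode R) =
      (LinearMap.id : A ⊗[R] A →ₗ[R] A ⊗[R] A) := by
  rw [twistMap_comp, LinearMap.antipode_mul_id, twistMap_convOne]

lemma twistMap_antipode_comp_twistMap_id :
    twistMap (HopfAlgebra.antipode R) ∘ₗ twistMap LinearMap.id =
      (LinearMap.id : A ⊗[R] A →ₗ[R] A ⊗[R] A) := by
  rw [twistMap_comp, LinearMap.id_mul_antipode, twistMap_convOne]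

end Antipode

lemma lTensor_bialgHom_mul {R A B C : Type*} [CommSemiring R] [Semiring A] [Algebra R A]
    [Semiring B] [Bialgebra R B] [Semiring C] [Bialgebra R C] (π : B →ₐc[R] C)
    (x y : A ⊗[R] B) :
    LinearMap.lTensor A (π : B →ₗ[R] C) (x * y) =
      LinearMap.lTensor A (π : B →ₗ[R] C) x * LinearMap.lTensor A (π : B →ₗ[R] C) y :=
  map_mul (Algebra.TensorProduct.map (AlgHom.id R A) (π : B →ₐ[R] C)) x y

section Coaction

variable {R A B : Type*} [CommSemiring R] [Semiring A] [Bialgebra R A] [Semiring B]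
  [Bialgebra R B]

noncomputable def coaction (π : A →ₐc[R] B) : A →ₐ[R] A ⊗[R] B :=
  (Algebra.TensorProduct.map (AlgHom.id R A) π).comp (Bialgebra.comulAlgHom R A)

lemma coaction_apply (π : A →ₐc[R] B) (a : A) :
    coaction π a = LinearMap.lTensor A (π : A →ₗ[R] B) (comul a) := rfl

end Coaction

variable {G H}

lemma verPre_eq (π : G →ₐc[ℂ] H) :
    verPre G H π = LinearMap.lTensor G (π : G →ₗ[ℂ] H) ∘ₗ twistMap LinearMap.id := by
  rw [verPre, twistMap, LinearMap.rTensor_id, LinearMap.id_comp]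

lemma vMap_eq (π : G →ₐc[ℂ] H) :
    vMap G H π = (relSub G H π).mkQ ∘ₗ twistMap (HopfAlgebra.antipode ℂ) := rfl

lemma verPre_tmul (π : G →ₐc[ℂ] H) (f g : G) :
    verPre G H π (f ⊗ₜ g) = (f ⊗ₜ 1) * coaction π g := by
  rw [verPre_eq, LinearMap.comp_apply, twistMap_tmul, LinearMap.rTensor_id, LinearMap.id_apply,
    lTensor_bialgHom_mul, coaction_apply, LinearMap.lTensor_tmul, LinearMap.coe_coe, map_one]

lemma relSub_le_ker_verPre (π : G →ₐc[ℂ] H) : relSub G H π ≤ LinearMap.ker (verPre G H π) := by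
  refine Submodule.span_le.2 ?_
  rintro _ ⟨f, g, m, hm, rfl⟩
  have hm : coaction π m = m ⊗ₜ 1 := hm
  rw [SetLike.mem_coe, LinearMap.mem_ker, map_sub, sub_eq_zero, verPre_tmul, verPre_tmul,
    map_mul, hm, ← mul_assoc, Algebra.TensorProduct.tmul_mul_tmul, one_mul]

lemma tmul_one_mul_mem_relSub (π : G →ₐc[ℂ] H) (a : G) {x : G ⊗[ℂ] G}
    (hx : x ∈ relSub G H π) : (a ⊗ₜ 1) * x ∈ relSub G H π := by
  induction hx using Submodule.span_induction with
  | mem x hx =>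
    obtain ⟨f, g, m, hm, rfl⟩ := hx
    refine Submodule.subset_span ⟨a * f, g, m, hm, ?_⟩
    simp only [mul_sub, Algebra.TensorProduct.tmul_mul_tmul, one_mul, mul_assoc]
  | zero => simp
  | add x y _ _ hx hy => simpa [mul_add] using add_mem hx hy
  | smul c x _ hx => simpa [mul_smul_comm] using Submodule.smul_mem _ c hx

lemma vMap_tmul_eq_zero (π : G →ₐc[ℂ] H)
    (hv : ∀ p : G, π p = 0 → vMap G H π ((1 : G) ⊗ₜ[ℂ] p) = 0) (a : G) {p : G} (hp : π p = 0) :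
    vMap G H π (a ⊗ₜ p) = 0 := by
  have h1p := hv p hp
  rw [vMap_eq, LinearMap.comp_apply, Submodule.mkQ_apply, Submodule.Quotient.mk_eq_zero] at h1p ⊢
  have hap : a ⊗ₜ[ℂ] p = (a ⊗ₜ 1) * (1 ⊗ₜ p) := by
    rw [Algebra.TensorProduct.tmul_mul_tmul, mul_one, one_mul]
  rw [hap, twistMap_tmul_one_mul]
  exact tmul_one_mul_mem_relSub π a h1p

lemma vMap_comp_lTensor_section (π : G →ₐc[ℂ] H)
    (hv : ∀ p : G, π p = 0 → vMap G H π ((1 : G) ⊗ₜ[ℂ] p) = 0) {i : H →ₗ[ℂ] G}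
    (hi : (π : G →ₗ[ℂ] H) ∘ₗ i = LinearMap.id) :
    vMap G H π ∘ₗ LinearMap.lTensor G (i ∘ₗ (π : G →ₗ[ℂ] H)) = vMap G H π := by
  ext a b
  have hker : π (i (π b) - b) = 0 := by
    rw [map_sub, ← LinearMap.coe_coe (f := π), ← LinearMap.comp_apply, hi, LinearMap.id_apply,
      sub_self]
  simpa [tmul_sub, sub_eq_zero] using vMap_tmul_eq_zero π hv a hker

lemma verPre_comp_twistMap_antipode (π : G →ₐc[ℂ] H) :
    verPre G H π ∘ₗ twistMap (HopfAlgebra.antipode ℂ) = LinearMap.lTensor G (π : G →ₗ[ℂ] H) := by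
  rw [verPre_eq, LinearMap.comp_assoc, twistMap_id_comp_twistMap_antipode, LinearMap.comp_id]

lemma vMap_comp_twistMap_id (π : G →ₐc[ℂ] H) :
    vMap G H π ∘ₗ twistMap LinearMap.id = (relSub G H π).mkQ := by
  rw [vMap_eq, LinearMap.comp_assoc, twistMap_antipode_comp_twistMap_id, LinearMap.comp_id]

lemma vMap_comp_lTensor_comp_verPre (π : G →ₐc[ℂ] H)
    (hv : ∀ p : G, π p = 0 → vMap G H π ((1 : G) ⊗ₜ[ℂ] p) = 0) {i : H →ₗ[ℂ] G}
    (hi : (π : G →ₗ[ℂ] H) ∘ₗ i = LinearMap.id) :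
    (vMap G H π ∘ₗ LinearMap.lTensor G i) ∘ₗ verPre G H π = (relSub G H π).mkQ := by
  rw [verPre_eq, ← LinearMap.comp_assoc, LinearMap.comp_assoc _ (LinearMap.lTensor G i),
    ← LinearMap.lTensor_comp, vMap_comp_lTensor_section π hv hi, vMap_comp_twistMap_id]

/-- If `v(1 ⊗ p) = 0` for all `p ∈ ker(π)`, then `ver : G ⊗_M G → G ⊗ H` (the descent of
`f ⊗ g ↦ f·g₍₁₎ ⊗ π(g₍₂₎)`) is well defined and bijective, i.e. `G` is a Hopf–Galois
extension of `M`. -/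
theorem hopf_galois_of_v_ker_vanishes (π : G →ₐc[ℂ] H)
    (hπ : Function.Surjective π)
    (hv : ∀ p : G, π p = 0 → vMap G H π ((1 : G) ⊗ₜ[ℂ] p) = 0) :
    ∃ ver : GtensorMG G H π →ₗ[ℂ] G ⊗[ℂ] H,
      ver ∘ₗ (relSub G H π).mkQ = verPre G H π ∧ Function.Bijective ver := by
  obtain ⟨i, hi⟩ := (π : G →ₗ[ℂ] H).exists_rightInverse_of_surjective
    (LinearMap.range_eq_top.2 hπ)
  set ver := (relSub G H π).liftQ (verPre G H π) (relSub_le_ker_verPre π)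
  have hver : ver ∘ₗ (relSub G H π).mkQ = verPre G H π := Submodule.liftQ_mkQ _ _ _
  have inv_ver : (vMap G H π ∘ₗ LinearMap.lTensor G i) ∘ₗ ver = LinearMap.id := by
    refine Submodule.linearMap_qext _ ?_
    rw [LinearMap.comp_assoc, hver, vMap_comp_lTensor_comp_verPre π hv hi, LinearMap.id_comp]
  have ver_inv : ver ∘ₗ vMap G H π ∘ₗ LinearMap.lTensor G i = LinearMap.id := by
    simp only [vMap_eq, ← LinearMap.comp_assoc, hver, verPre_comp_twistMap_antipode]
    rw [← LinearMap.lTensor_comp, hi, LinearMap.lTensor_id]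
  exact ⟨ver, hver, (LinearEquiv.ofLinearMap ver _ ver_inv inv_ver : _ ≃ₗ[ℂ] _).bijective⟩
end

section
/- In ℂ_q[SU_N], every element p of ker(α_N) — where α_N : ℂ_q[SU_N] → ℂ_q[U_{N−1}] is the Hopf algebra surjection with α_N(u^1_1) = det_{N−1}⁻¹, α_N(u^1_i) = α_N(u^i_1) = 0 for i ≠ 1, and α_N(u^i_j) = u^{i−1}_{j−1} for i,j ≥ 2 — can be written as p = Σ_{i=2}^N u^i_1 f_i + Σ_{i=2}^N u^1_i g_i with f_i, g_i ∈ ℂ_q[SU_N]. -/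
open TensorProduct

/-- Entries of the standard type-A R-matrix. -/
noncomputable def Rent (q : ℝ) {N : ℕ} (i k j l : Fin N) : ℂ :=
  (if i = k then (q : ℂ) else 1) * (if i = l then 1 else 0) * (if k = j then 1 else 0)
    + ((q : ℂ) - (q : ℂ)⁻¹) * (if i < k then 1 else 0) *
        (if i = j then 1 else 0) * (if k = l then 1 else 0)

/-- The quantum determinant, as an element of the free algebra on the `N²` generators. -/
noncomputable def qdetF (q : ℝ) (N : ℕ) : FreeAlgebra ℂ (Fin N × Fin N) :=
  ∑ π : Equiv.Perm (Fin N),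
    ((-(q : ℂ)) ^
        ((Finset.univ.filter fun p : Fin N × Fin N => p.1 < p.2 ∧ π p.2 < π p.1).card)) •
      (List.ofFn fun i : Fin N => FreeAlgebra.ι ℂ (i, π i)).prod

/-- The defining relations of `ℂ_q[SU_N]`: the FRT relations together with `det_N = 1`. -/
inductive suRel (q : ℝ) (N : ℕ) :
    FreeAlgebra ℂ (Fin N × Fin N) → FreeAlgebra ℂ (Fin N × Fin N) → Prop
  | frt (a b c d : Fin N) : suRel q N
      (∑ w : Fin N, ∑ x : Fin N,
        Rent q a c w x • (FreeAlgebra.ι ℂ (w, b) * FreeAlgebra.ι ℂ (x, d)))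
      (∑ y : Fin N, ∑ z : Fin N,
        Rent q y z b d • (FreeAlgebra.ι ℂ (a, y) * FreeAlgebra.ι ℂ (c, z)))
  | det : suRel q N (qdetF q N) 1

/-- The quantized coordinate ring `ℂ_q[SU_N]`. -/
abbrev SUq (q : ℝ) (N : ℕ) := RingQuot (suRel q N)

/-- The generators `u^i_j` of `ℂ_q[SU_N]`. -/
noncomputable def ugen (q : ℝ) (N : ℕ) (i j : Fin N) : SUq q N :=
  RingQuot.mkAlgHom ℂ (suRel q N) (FreeAlgebra.ι ℂ (i, j))

/-- The quantum determinant in the free algebra on generators `u^i_j` plus one extra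
generator (the inverse of the determinant). -/
noncomputable def qdetF' (q : ℝ) (n : ℕ) : FreeAlgebra ℂ ((Fin n × Fin n) ⊕ Unit) :=
  ∑ π : Equiv.Perm (Fin n),
    ((-(q : ℂ)) ^
        ((Finset.univ.filter fun p : Fin n × Fin n => p.1 < p.2 ∧ π p.2 < π p.1).card)) •
      (List.ofFn fun i : Fin n => FreeAlgebra.ι ℂ (Sum.inl (i, π i))).prod

/-- The defining relations of `ℂ_q[U_n]`: the FRT relations together with the relations
making the extra generator a two-sided inverse of `det_n`. -/
inductive uqRel (q : ℝ) (n : ℕ) :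
    FreeAlgebra ℂ ((Fin n × Fin n) ⊕ Unit) → FreeAlgebra ℂ ((Fin n × Fin n) ⊕ Unit) → Prop
  | frt (a b c d : Fin n) : uqRel q n
      (∑ w : Fin n, ∑ x : Fin n,
        Rent q a c w x • (FreeAlgebra.ι ℂ (Sum.inl (w, b)) * FreeAlgebra.ι ℂ (Sum.inl (x, d))))
      (∑ y : Fin n, ∑ z : Fin n,
        Rent q y z b d • (FreeAlgebra.ι ℂ (Sum.inl (a, y)) * FreeAlgebra.ι ℂ (Sum.inl (c, z))))
  | detinv_left : uqRel q n (FreeAlgebra.ι ℂ (Sum.inr ()) * qdetF' q n) 1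
  | detinv_right : uqRel q n (qdetF' q n * FreeAlgebra.ι ℂ (Sum.inr ())) 1

/-- The quantized coordinate ring `ℂ_q[U_n]`. -/
abbrev Uq (q : ℝ) (n : ℕ) := RingQuot (uqRel q n)

/-- The generators `u^i_j` of `ℂ_q[U_n]`. -/
noncomputable def upgen (q : ℝ) (n : ℕ) (i j : Fin n) : Uq q n :=
  RingQuot.mkAlgHom ℂ (uqRel q n) (FreeAlgebra.ι ℂ (Sum.inl (i, j)))

/-- The inverse `det_n⁻¹` of the quantum determinant in `ℂ_q[U_n]`. -/
noncomputable def dinv (q : ℝ) (n : ℕ) : Uq q n :=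
  RingQuot.mkAlgHom ℂ (uqRel q n) (FreeAlgebra.ι ℂ (Sum.inr ()))

/-!
Indices start at `0`. Let `I` be the right ideal of elements
`Σ_{i≠0} u^i_0 f_i + Σ_{i≠0} u^0_i g_i`. The FRT relations put every `u^a_b u^i_0` and
`u^a_b u^0_i` (`i ≠ 0`) in `I`, so `I` is two-sided. In `ℂ_q[SU_N] / I` the first row and column
vanish off the corner, so the lower-right block satisfies the FRT relations of `ℂ_q[U_{N-1}]`,
commutes with the corner `u^0_0`, and the expansion of `det_N = 1` along the first row becomes
`u^0_0 · det_{N-1} = 1`. Hence `u^i_j ↦ u^{i+1}_{j+1}`, `det_{N-1}⁻¹ ↦ u^0_0` defines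
`γ : ℂ_q[U_{N-1}] → ℂ_q[SU_N] / I` with `γ ∘ α` the quotient map, and `ker α ⊆ I`.
-/

section RMatrix

variable {n : ℕ} {A : Type*} [AddCommMonoid A] [Module ℂ A]

lemma sum_Rent_smul_jl (q : ℝ) (a c : Fin n) (M : Fin n → Fin n → A) :
    ∑ w, ∑ x, Rent q a c w x • M w x
      = (if a = c then (q : ℂ) else 1) • M c a
        + (((q : ℂ) - (q : ℂ)⁻¹) * if a < c then 1 else 0) • M a c := by
  simp [Rent, add_smul, ite_smul, Finset.sum_add_distrib]

lemma sum_Rent_smul_ik (q : ℝ) (b d : Fin n) (M : Fin n → Fin n → A) :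
    ∑ y, ∑ z, Rent q y z b d • M y z
      = (if b = d then (q : ℂ) else 1) • M d b
        + (((q : ℂ) - (q : ℂ)⁻¹) * if b < d then 1 else 0) • M b d := by
  simp [Rent, add_smul, ite_smul, Finset.sum_add_distrib, eq_comm (a := d)]

end RMatrix

lemma Equiv.Perm.card_inversions_decomposeFin_symm_zero {n : ℕ} (σ : Perm (Fin (n + 1))) :
    (Finset.univ.filter fun p : Fin (n + 2) × Fin (n + 2) => p.1 < p.2 ∧
      decomposeFin.symm (0, σ) p.2 < decomposeFin.symm (0, σ) p.1).card
    = (Finset.univ.filter fun p : Fin (n + 1) × Fin (n + 1) =>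
        p.1 < p.2 ∧ σ p.2 < σ p.1).card := by
  simp only [Finset.card_filter, Fintype.sum_prod_type, Fin.sum_univ_succ,
    decomposeFin_symm_apply_zero, decomposeFin_symm_apply_succ, Equiv.swap_self,
    Equiv.refl_apply, Fin.succ_lt_succ_iff, Fin.not_lt_zero, lt_irrefl, Fin.succ_pos]
  simp

namespace SUq

variable {q : ℝ} {N : ℕ}

lemma ugen_frt (a b c d : Fin N) :
    (if a = c then (q : ℂ) else 1) • (ugen q N c b * ugen q N a d)
      + (((q : ℂ) - (q : ℂ)⁻¹) * if a < c then 1 else 0) • (ugen q N a b * ugen q N c d)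
    = (if b = d then (q : ℂ) else 1) • (ugen q N a d * ugen q N c b)
      + (((q : ℂ) - (q : ℂ)⁻¹) * if b < d then 1 else 0) •
          (ugen q N a b * ugen q N c d) := by
  have h := RingQuot.mkAlgHom_rel ℂ (suRel.frt (q := q) a b c d)
  simp only [map_sum, map_smul, map_mul] at h
  rwa [sum_Rent_smul_jl, sum_Rent_smul_ik] at h

lemma qdet_ugen_eq_one :
    ∑ π : Equiv.Perm (Fin N),
        ((-(q : ℂ)) ^
          ((Finset.univ.filter fun p : Fin N × Fin N => p.1 < p.2 ∧ π p.2 < π p.1).card)) •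
          (List.ofFn fun i => ugen q N i (π i)).prod = 1 := by
  have h := RingQuot.mkAlgHom_rel ℂ (suRel.det (q := q) (N := N))
  rw [map_one, qdetF, map_sum] at h
  simpa only [map_smul, map_list_prod, List.map_ofFn, Function.comp_def, ugen] using h

@[elab_as_elim]
lemma induction_on {P : SUq q N → Prop} (x : SUq q N)
    (algebraMap : ∀ r : ℂ, P (algebraMap ℂ _ r)) (ugen : ∀ i j, P (ugen q N i j))
    (add : ∀ x y, P x → P y → P (x + y)) (mul : ∀ x y, P x → P y → P (x * y)) :
    P x := by
  obtain ⟨x, rfl⟩ := RingQuot.mkAlgHom_surjective ℂ (suRel q N) x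
  induction x using FreeAlgebra.induction with
  | grade0 r => simpa only [AlgHom.commutes] using algebraMap r
  | grade1 ij => exact ugen ij.1 ij.2
  | add x y hx hy => simpa only [map_add] using add _ _ hx hy
  | mul x y hx hy => simpa only [map_mul] using mul _ _ hx hy

variable [NeZero N]

lemma ugen_corner_mul_col (hq : q ≠ 0) {i : Fin N} (hi : i ≠ 0) :
    ugen q N 0 0 * ugen q N i 0 = (q : ℂ) • (ugen q N i 0 * ugen q N 0 0) := by
  have h := ugen_frt (q := q) 0 0 i 0
  simp only [if_neg (Ne.symm hi), if_pos (Fin.pos_iff_ne_zero.mpr hi), lt_irrefl, if_true,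
    if_false, mul_one, mul_zero, zero_smul, add_zero, one_smul] at h
  have hq' : (q : ℂ) ≠ 0 := Complex.ofReal_ne_zero.mpr hq
  rw [eq_sub_of_add_eq h]
  match_scalars
  field_simp
  ring

lemma ugen_corner_mul_row (hq : q ≠ 0) {j : Fin N} (hj : j ≠ 0) :
    ugen q N 0 0 * ugen q N 0 j = (q : ℂ) • (ugen q N 0 j * ugen q N 0 0) := by
  have h := ugen_frt (q := q) 0 0 0 j
  simp only [if_neg (Ne.symm hj), if_pos (Fin.pos_iff_ne_zero.mpr hj), lt_irrefl, if_true,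
    if_false, mul_one, mul_zero, zero_smul, add_zero, one_smul] at h
  have hq' : (q : ℂ) ≠ 0 := Complex.ofReal_ne_zero.mpr hq
  rw [eq_sub_of_add_eq h.symm]
  match_scalars
  field_simp
  ring

end SUq

section RowColIdeal

variable {q : ℝ} {N : ℕ}

variable (q N) in
noncomputable def rowColSpan : Submodule ℂ (SUq q (N + 2)) where
  carrier := {p | ∃ f g : Fin (N + 2) → SUq q (N + 2),
    p = (∑ i ∈ Finset.univ.filter (fun i : Fin (N + 2) => i ≠ 0), ugen q (N + 2) i 0 * f i)
      + (∑ i ∈ Finset.univ.filter (fun i : Fin (N + 2) => i ≠ 0), ugen q (N + 2) 0 i * g i)}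
  add_mem' := by
    rintro _ _ ⟨f, g, rfl⟩ ⟨f', g', rfl⟩
    refine ⟨f + f', g + g', ?_⟩
    simp only [Pi.add_apply, mul_add, Finset.sum_add_distrib]
    abel
  zero_mem' := ⟨0, 0, by simp⟩
  smul_mem' := by
    rintro c _ ⟨f, g, rfl⟩
    exact ⟨c • f, c • g, by
      simp only [Pi.smul_apply, smul_add, Finset.smul_sum, mul_smul_comm]⟩

namespace rowColSpan

lemma mul_mem_right {p : SUq q (N + 2)} (hp : p ∈ rowColSpan q N) (x : SUq q (N + 2)) :
    p * x ∈ rowColSpan q N := by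
  obtain ⟨f, g, rfl⟩ := hp
  exact ⟨fun i => f i * x, fun i => g i * x, by simp only [add_mul, Finset.sum_mul, mul_assoc]⟩

lemma ugen_col_mul_mem {i : Fin (N + 2)} (hi : i ≠ 0) (x : SUq q (N + 2)) :
    ugen q (N + 2) i 0 * x ∈ rowColSpan q N :=
  ⟨Pi.single i x, 0, by simp [Pi.single_apply, hi]⟩

lemma ugen_row_mul_mem {i : Fin (N + 2)} (hi : i ≠ 0) (x : SUq q (N + 2)) :
    ugen q (N + 2) 0 i * x ∈ rowColSpan q N :=
  ⟨0, Pi.single i x, by simp [Pi.single_apply, hi]⟩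

lemma ugen_mul_ugen_col_mem (hq : q ≠ 0) (a b : Fin (N + 2)) {i : Fin (N + 2)}
    (hi : i ≠ 0) :
    ugen q (N + 2) a b * ugen q (N + 2) i 0 ∈ rowColSpan q N := by
  rcases eq_or_ne a 0 with rfl | ha <;> rcases eq_or_ne b 0 with rfl | hb
  · rw [SUq.ugen_corner_mul_col hq hi]
    exact Submodule.smul_mem _ _ (ugen_col_mul_mem hi _)
  · exact ugen_row_mul_mem hb _
  · exact ugen_col_mul_mem ha _
  · have h := SUq.ugen_frt (q := q) a 0 i b
    rw [if_neg (Ne.symm hb), if_pos (Fin.pos_iff_ne_zero.mpr hb), mul_one, one_smul] at h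
    rw [eq_sub_of_add_eq h.symm]
    exact sub_mem (add_mem (Submodule.smul_mem _ _ (ugen_col_mul_mem hi _))
      (Submodule.smul_mem _ _ (ugen_col_mul_mem ha _)))
      (Submodule.smul_mem _ _ (ugen_col_mul_mem ha _))

lemma ugen_mul_ugen_row_mem (hq : q ≠ 0) (a b : Fin (N + 2)) {j : Fin (N + 2)}
    (hj : j ≠ 0) :
    ugen q (N + 2) a b * ugen q (N + 2) 0 j ∈ rowColSpan q N := by
  rcases eq_or_ne a 0 with rfl | ha <;> rcases eq_or_ne b 0 with rfl | hb
  · rw [SUq.ugen_corner_mul_row hq hj]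
    exact Submodule.smul_mem _ _ (ugen_row_mul_mem hj _)
  · exact ugen_row_mul_mem hb _
  · exact ugen_col_mul_mem ha _
  · have h := SUq.ugen_frt (q := q) 0 b a j
    rw [if_neg (Ne.symm ha), if_pos (Fin.pos_iff_ne_zero.mpr ha), mul_one, one_smul] at h
    rw [eq_sub_of_add_eq h]
    exact sub_mem (add_mem (Submodule.smul_mem _ _ (ugen_row_mul_mem hj _))
      (Submodule.smul_mem _ _ (ugen_row_mul_mem hb _)))
      (Submodule.smul_mem _ _ (ugen_row_mul_mem hb _))

lemma mul_mem_left (hq : q ≠ 0) (x : SUq q (N + 2)) {p : SUq q (N + 2)}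
    (hp : p ∈ rowColSpan q N) : x * p ∈ rowColSpan q N := by
  induction x using SUq.induction_on generalizing p with
  | algebraMap r => simpa only [← Algebra.smul_def] using Submodule.smul_mem _ r hp
  | ugen a b =>
    obtain ⟨f, g, rfl⟩ := hp
    simp only [mul_add, Finset.mul_sum, ← mul_assoc]
    refine add_mem (Submodule.sum_mem _ fun i hi => ?_) (Submodule.sum_mem _ fun i hi => ?_)
    · exact mul_mem_right (ugen_mul_ugen_col_mem hq a b (Finset.mem_filter.mp hi).2) _
    · exact mul_mem_right (ugen_mul_ugen_row_mem hq a b (Finset.mem_filter.mp hi).2) _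
  | add x y hx hy => simpa only [add_mul] using add_mem (hx hp) (hy hp)
  | mul x y hx hy => simpa only [mul_assoc] using hx (hy hp)

end rowColSpan

noncomputable def rowColIdeal (hq : q ≠ 0) : TwoSidedIdeal (SUq q (N + 2)) :=
  .mk' (rowColSpan q N) (zero_mem _) add_mem neg_mem (rowColSpan.mul_mem_left hq _)
    (rowColSpan.mul_mem_right · _)

lemma mem_rowColIdeal (hq : q ≠ 0) {p : SUq q (N + 2)} :
    p ∈ rowColIdeal hq ↔ p ∈ rowColSpan q N :=
  TwoSidedIdeal.mem_mk' ..

end RowColIdeal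

section Quotient

variable {q : ℝ} {N : ℕ} (hq : q ≠ 0)

noncomputable def mkRowCol : SUq q (N + 2) →ₐ[ℂ] (rowColIdeal (N := N) hq).ringCon.Quotient :=
  (rowColIdeal hq).ringCon.mkₐ ℂ

lemma mkRowCol_eq_zero_iff {p : SUq q (N + 2)} : mkRowCol hq p = 0 ↔ p ∈ rowColSpan q N := by
  rw [← mem_rowColIdeal hq, TwoSidedIdeal.mem_iff, ← RingCon.eq]
  rfl

lemma mkRowCol_ugen_col {i : Fin (N + 2)} (hi : i ≠ 0) :
    mkRowCol hq (ugen q (N + 2) i 0) = 0 :=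
  (mkRowCol_eq_zero_iff hq).mpr (by simpa using rowColSpan.ugen_col_mul_mem hi 1)

lemma mkRowCol_ugen_row {i : Fin (N + 2)} (hi : i ≠ 0) :
    mkRowCol hq (ugen q (N + 2) 0 i) = 0 :=
  (mkRowCol_eq_zero_iff hq).mpr (by simpa using rowColSpan.ugen_row_mul_mem hi 1)

lemma commute_mkRowCol_corner (i j : Fin (N + 1)) :
    Commute (mkRowCol hq (ugen q (N + 2) 0 0))
      (mkRowCol hq (ugen q (N + 2) i.succ j.succ)) := by
  have h := congrArg (mkRowCol hq) (SUq.ugen_frt (q := q) 0 j.succ i.succ 0)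
  simp only [map_add, map_smul, map_mul, mkRowCol_ugen_row hq (Fin.succ_ne_zero j),
    mkRowCol_ugen_col hq (Fin.succ_ne_zero i), mul_zero, smul_zero, add_zero,
    if_neg (Fin.succ_ne_zero i).symm, if_neg (Fin.succ_ne_zero j), one_smul] at h
  exact h.symm

noncomputable def shiftLift : FreeAlgebra ℂ ((Fin (N + 1) × Fin (N + 1)) ⊕ Unit) →ₐ[ℂ]
    (rowColIdeal (N := N) hq).ringCon.Quotient :=
  FreeAlgebra.lift ℂ <| Sum.elim (fun ij => mkRowCol hq (ugen q (N + 2) ij.1.succ ij.2.succ))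
    (fun _ => mkRowCol hq (ugen q (N + 2) 0 0))

lemma shiftLift_inl (i j : Fin (N + 1)) :
    shiftLift hq (FreeAlgebra.ι ℂ (.inl (i, j)))
      = mkRowCol hq (ugen q (N + 2) i.succ j.succ) := by
  simp [shiftLift]

lemma shiftLift_inr :
    shiftLift hq (FreeAlgebra.ι ℂ (.inr ())) = mkRowCol hq (ugen q (N + 2) 0 0) := by
  simp [shiftLift]

lemma mkRowCol_corner_mul_shiftLift_qdet :
    mkRowCol hq (ugen q (N + 2) 0 0) * shiftLift hq (qdetF' q (N + 1)) = 1 := by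
  have h := congrArg (mkRowCol hq) (SUq.qdet_ugen_eq_one (q := q) (N := N + 2))
  rw [map_one, map_sum, ← Equiv.sum_comp Equiv.Perm.decomposeFin.symm, Fintype.sum_prod_type,
    Fin.sum_univ_succ] at h
  -- a permutation with `π 0 ≠ 0` contributes through its first factor `u^0_{π 0} = 0`
  simp only [List.ofFn_succ (n := N + 1), List.prod_cons,
    Equiv.Perm.decomposeFin_symm_apply_zero, map_smul, map_mul, ne_eq, Fin.succ_ne_zero,
    not_false_eq_true, mkRowCol_ugen_row, zero_mul,
    smul_zero, Finset.sum_const_zero, add_zero] at h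
  rw [← h, qdetF', map_sum, Finset.mul_sum]
  refine Finset.sum_congr rfl fun σ _ => ?_
  simp [Equiv.Perm.card_inversions_decomposeFin_symm_zero, map_list_prod, Function.comp_def,
    shiftLift_inl]

lemma commute_mkRowCol_corner_shiftLift
    (y : FreeAlgebra ℂ ((Fin (N + 1) × Fin (N + 1)) ⊕ Unit)) :
    Commute (mkRowCol hq (ugen q (N + 2) 0 0)) (shiftLift hq y) := by
  induction y using FreeAlgebra.induction with
  | grade0 r => simpa only [AlgHom.commutes] using Algebra.commute_algebraMap_right r _
  | grade1 t =>
    rcases t with ⟨i, j⟩ | ⟨⟩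
    · simpa only [shiftLift_inl] using commute_mkRowCol_corner hq i j
    · rw [shiftLift_inr]
  | add x y hx hy => simpa only [map_add] using hx.add_right hy
  | mul x y hx hy => simpa only [map_mul] using hx.mul_right hy

lemma shiftLift_eq_of_uqRel {x y : FreeAlgebra ℂ ((Fin (N + 1) × Fin (N + 1)) ⊕ Unit)}
    (h : uqRel q (N + 1) x y) : shiftLift hq x = shiftLift hq y := by
  cases h with
  | frt a b c d =>
    rw [sum_Rent_smul_jl, sum_Rent_smul_ik]
    simp only [map_add, map_smul, map_mul, shiftLift_inl]
    have h := congrArg (mkRowCol hq) (SUq.ugen_frt (q := q) a.succ b.succ c.succ d.succ)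
    simp only [map_add, map_smul, map_mul] at h
    simpa [Fin.succ_inj, Fin.succ_lt_succ_iff] using h
  | detinv_left =>
    rw [map_mul, map_one, shiftLift_inr]
    exact mkRowCol_corner_mul_shiftLift_qdet hq
  | detinv_right =>
    rw [map_mul, map_one, shiftLift_inr, ← (commute_mkRowCol_corner_shiftLift hq _).eq]
    exact mkRowCol_corner_mul_shiftLift_qdet hq

noncomputable def uqToQuot : Uq q (N + 1) →ₐ[ℂ] (rowColIdeal (N := N) hq).ringCon.Quotient :=
  RingQuot.liftAlgHom ℂ ⟨shiftLift hq, fun _ _ => shiftLift_eq_of_uqRel hq⟩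

lemma uqToQuot_upgen (i j : Fin (N + 1)) :
    uqToQuot hq (upgen q (N + 1) i j) = mkRowCol hq (ugen q (N + 2) i.succ j.succ) := by
  rw [upgen, uqToQuot, RingQuot.liftAlgHom_mkAlgHom_apply, shiftLift_inl]

lemma uqToQuot_dinv : uqToQuot hq (dinv q (N + 1)) = mkRowCol hq (ugen q (N + 2) 0 0) := by
  rw [dinv, uqToQuot, RingQuot.liftAlgHom_mkAlgHom_apply, shiftLift_inr]

lemma uqToQuot_comp_eq_mkRowCol (α : SUq q (N + 2) →ₐ[ℂ] Uq q (N + 1))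
    (h00 : α (ugen q (N + 2) 0 0) = dinv q (N + 1))
    (h0i : ∀ i : Fin (N + 2), i ≠ 0 →
      α (ugen q (N + 2) 0 i) = 0 ∧ α (ugen q (N + 2) i 0) = 0)
    (hij : ∀ (i j : Fin (N + 2)) (hi : i ≠ 0) (hj : j ≠ 0),
      α (ugen q (N + 2) i j) = upgen q (N + 1) (i.pred hi) (j.pred hj)) :
    (uqToQuot hq).comp α = mkRowCol hq := by
  refine RingQuot.ringQuot_ext' ℂ _ _ (FreeAlgebra.hom_ext (funext fun ⟨i, j⟩ => ?_))
  change uqToQuot hq (α (ugen q (N + 2) i j)) = mkRowCol hq (ugen q (N + 2) i j)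
  rcases eq_or_ne i 0 with rfl | hi <;> rcases eq_or_ne j 0 with rfl | hj
  · rw [h00, uqToQuot_dinv]
  · rw [(h0i j hj).1, map_zero, mkRowCol_ugen_row hq hj]
  · rw [(h0i i hi).2, map_zero, mkRowCol_ugen_col hq hi]
  · rw [hij i j hi hj, uqToQuot_upgen, Fin.succ_pred, Fin.succ_pred]

end Quotient

theorem ker_alpha_generated_general (q : ℝ) (hq0 : 0 < q) (N : ℕ)
    (α : SUq q (N + 2) →ₐ[ℂ] Uq q (N + 1))
    (h00 : α (ugen q (N + 2) 0 0) = dinv q (N + 1))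
    (h0i : ∀ i : Fin (N + 2), i ≠ 0 →
      α (ugen q (N + 2) 0 i) = 0 ∧ α (ugen q (N + 2) i 0) = 0)
    (hij : ∀ (i j : Fin (N + 2)) (hi : i ≠ 0) (hj : j ≠ 0),
      α (ugen q (N + 2) i j) = upgen q (N + 1) (i.pred hi) (j.pred hj)) :
    ∀ p : SUq q (N + 2), α p = 0 →
      ∃ f g : Fin (N + 2) → SUq q (N + 2),
        p = (∑ i ∈ Finset.univ.filter (fun i : Fin (N + 2) => i ≠ 0),
              ugen q (N + 2) i 0 * f i)
          + (∑ i ∈ Finset.univ.filter (fun i : Fin (N + 2) => i ≠ 0),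
              ugen q (N + 2) 0 i * g i) := by
  intro p hp
  have hq : q ≠ 0 := hq0.ne'
  refine (mkRowCol_eq_zero_iff hq).mp ?_
  rw [← uqToQuot_comp_eq_mkRowCol hq α h00 h0i hij, AlgHom.comp_apply, hp, map_zero]

/-- Every element of the kernel of the Hopf algebra surjection
`α_N : ℂ_q[SU_N] → ℂ_q[U_{N−1}]` (determined by `α_N(u^1_1) = det_{N−1}⁻¹`,
`α_N(u^1_i) = α_N(u^i_1) = 0` for `i ≠ 1` and `α_N(u^i_j) = u^{i−1}_{j−1}` for
`i,j ≥ 2`) can be written as `p = Σ_{i=2}^N u^i_1 f_i + Σ_{i=2}^N u^1_i g_i`.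
(Here `N` is written as `N+2` to express `N ≥ 2`.) -/
theorem ker_alpha_generated (q : ℝ) (hq0 : 0 < q) (hq1 : q ≤ 1) (N : ℕ)
    (α : SUq q (N + 2) →ₐ[ℂ] Uq q (N + 1))
    (h00 : α (ugen q (N + 2) 0 0) = dinv q (N + 1))
    (h0i : ∀ i : Fin (N + 2), i ≠ 0 →
      α (ugen q (N + 2) 0 i) = 0 ∧ α (ugen q (N + 2) i 0) = 0)
    (hij : ∀ (i j : Fin (N + 2)) (hi : i ≠ 0) (hj : j ≠ 0),
      α (ugen q (N + 2) i j) = upgen q (N + 1) (i.pred hi) (j.pred hj)) :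
    ∀ p : SUq q (N + 2), α p = 0 →
      ∃ f g : Fin (N + 2) → SUq q (N + 2),
        p = (∑ i ∈ Finset.univ.filter (fun i : Fin (N + 2) => i ≠ 0),
              ugen q (N + 2) i 0 * f i)
          + (∑ i ∈ Finset.univ.filter (fun i : Fin (N + 2) => i ≠ 0),
              ugen q (N + 2) 0 i * g i) :=
  ker_alpha_generated_general q hq0 N α h00 h0i hij
end

section
/- In ℂ_q[SU_2] with its calculus Ω¹_q(SU_2) determined by the ideal I generated by a + qd − (q+1), bc, b², c², (a−q)b, (a−q)c in ker(ε), the calculus is not isomorphic to Woronowicz's 3D calculus: the ideal I' of the 3D calculus, generated by a + q⁻²d − (1 + q⁻²), bc, b², c², (a−1)b, (a−1)c, is distinct from I, since any right ideal of ker(ε) containing both (a−q)b and (a−1)b contains b, while neither I nor I' contains b (for q ≠ 1). -/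
open TensorProduct

/-- The right ideal of an algebra generated by a set. -/
noncomputable def rIdeal {A : Type*} [Ring A] [Algebra ℂ A] (s : Set A) : Submodule ℂ A :=
  Submodule.span ℂ {x : A | ∃ g ∈ s, ∃ f : A, x = g * f}

/-!
Both ideals are detected by two-dimensional representations of `ℂ_q[SU_2]`: for every `t ≠ 0`,
`a ↦ diag(q t, t)`, `b ↦ E₁₂`, `c ↦ 0`, `d ↦ a⁻¹` respects the defining relations. Matrices with
vanishing first row form a right ideal, and for `t = 1` (resp. `t = q⁻¹`) every generator of `I`
(resp. `I'`) is sent to such a matrix, while `b` is not. Finally, a right ideal containing `(a - q)b`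
and `(a - 1)b` contains their difference `(1 - q)b`.
-/

structure SUq2Relations {R : Type*} [Ring R] [Algebra ℂ R] (q : ℝ) (A B C D : R) : Prop where
  ab : A * B = (q : ℂ) • (B * A)
  ac : A * C = (q : ℂ) • (C * A)
  cb : C * B = B * C
  bd : B * D = (q : ℂ) • (D * B)
  cd : C * D = (q : ℂ) • (D * C)
  da : D * A = A * D - ((q : ℂ) - (q : ℂ)⁻¹) • (B * C)
  det : A * D - (q : ℂ) • (B * C) = 1

theorem qdetF_two (q : ℝ) :
    qdetF q 2 = FreeAlgebra.ι ℂ (0, 0) * FreeAlgebra.ι ℂ (1, 1)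
      - (q : ℂ) • (FreeAlgebra.ι ℂ (0, 1) * FreeAlgebra.ι ℂ (1, 0)) := by
  have huniv : (Finset.univ : Finset (Equiv.Perm (Fin 2))) = {1, Equiv.swap 0 1} := by decide
  have hinv₁ : (Finset.univ.filter fun p : Fin 2 × Fin 2 =>
      p.1 < p.2 ∧ (1 : Equiv.Perm (Fin 2)) p.2 < (1 : Equiv.Perm (Fin 2)) p.1).card = 0 := by
    decide
  have hinv₂ : (Finset.univ.filter fun p : Fin 2 × Fin 2 =>
      p.1 < p.2 ∧ Equiv.swap (0 : Fin 2) 1 p.2 < Equiv.swap (0 : Fin 2) 1 p.1).card = 1 := by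
    decide
  rw [qdetF, huniv, Finset.sum_insert (by decide), Finset.sum_singleton, hinv₁, hinv₂]
  simp [List.ofFn_succ, sub_eq_add_neg, -Complex.coe_smul]

namespace SUq2Relations

variable {R : Type*} [Ring R] [Algebra ℂ R] {q : ℝ} {A B C D : R}

theorem freeAlgebraLift_eq_of_suRel (h : SUq2Relations q A B C D) (hq : q ≠ 0)
    {x y : FreeAlgebra ℂ (Fin 2 × Fin 2)} (hxy : suRel q 2 x y) :
    FreeAlgebra.lift ℂ (fun p => !![A, B; C, D] p.1 p.2) x =
      FreeAlgebra.lift ℂ (fun p => !![A, B; C, D] p.1 p.2) y := by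
  have hq' : (q : ℂ) ≠ 0 := by exact_mod_cast hq
  induction hxy with
  | frt i j k l =>
    fin_cases i <;> fin_cases j <;> fin_cases k <;> fin_cases l <;>
      simp [Rent, Fin.sum_univ_two, -Complex.coe_smul] <;>
      simp only [h.ab, h.ac, h.cb, h.bd, h.cd, h.da] <;> match_scalars <;> field_simp <;> ring
  | det => simpa [qdetF_two, -Complex.coe_smul] using h.det

noncomputable def liftAlgHom (h : SUq2Relations q A B C D) (hq : q ≠ 0) : SUq q 2 →ₐ[ℂ] R :=
  RingQuot.liftAlgHom ℂ ⟨FreeAlgebra.lift ℂ fun p => !![A, B; C, D] p.1 p.2,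
    fun _ _ => h.freeAlgebraLift_eq_of_suRel hq⟩

@[simp]
theorem liftAlgHom_ugen (h : SUq2Relations q A B C D) (hq : q ≠ 0) (i j : Fin 2) :
    h.liftAlgHom hq (ugen q 2 i j) = !![A, B; C, D] i j := by
  rw [liftAlgHom, ugen, RingQuot.liftAlgHom_mkAlgHom_apply, FreeAlgebra.lift_ι_apply]

end SUq2Relations

theorem SUq2Relations.diagonal (q t : ℝ) (hq : q ≠ 0) (ht : t ≠ 0) :
    SUq2Relations q !![(q : ℂ) * t, 0; 0, (t : ℂ)] !![0, 1; 0, 0] 0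
      !![((q : ℂ) * t)⁻¹, 0; 0, (t : ℂ)⁻¹] := by
  have hq' : (q : ℂ) ≠ 0 := by exact_mod_cast hq
  have ht' : (t : ℂ) ≠ 0 := by exact_mod_cast ht
  constructor <;> ext i j <;> fin_cases i <;> fin_cases j <;>
    simp [Matrix.mul_apply, Fin.sum_univ_two] <;> field_simp

section RightIdeal

variable {A : Type*} [Ring A] [Algebra ℂ A]

theorem subset_rIdeal (s : Set A) : s ⊆ rIdeal s :=
  fun g hg => Submodule.subset_span ⟨g, hg, 1, (mul_one g).symm⟩

theorem notMem_rIdeal_of_row_eq_zero {n : Type*} [Fintype n] [DecidableEq n]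
    (φ : A →ₐ[ℂ] Matrix n n ℂ) (i : n) {s : Set A} (hs : ∀ g ∈ s, φ g i = 0) {x : A}
    (hx : φ x i ≠ 0) : x ∉ rIdeal s := by
  let rowMap : A →ₗ[ℂ] n → ℂ := (LinearMap.proj i).comp φ.toLinearMap
  suffices rIdeal s ≤ LinearMap.ker rowMap from fun hmem => hx (this hmem)
  refine Submodule.span_le.2 ?_
  rintro _ ⟨g, hg, f, rfl⟩
  ext j
  change (φ (g * f)) i j = 0
  simp [Matrix.mul_apply, hs g hg]

end RightIdeal

theorem mem_of_sub_smul_one_mul_mem {K A : Type*} [Field K] [Ring A] [Algebra K A]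
    (p : Submodule K A) {x y : A} {s t : K} (hst : s ≠ t) (hs : (x - s • 1) * y ∈ p)
    (ht : (x - t • 1) * y ∈ p) : y ∈ p := by
  have hdiff : (t - s) • y ∈ p := by
    convert p.sub_mem hs ht using 1
    simp only [sub_mul, smul_mul_assoc, one_mul]
    module
  exact (p.smul_mem_iff (sub_ne_zero.2 hst.symm)).1 hdiff

noncomputable def su2CalculusIdeal (q : ℝ) : Submodule ℂ (SUq q 2) :=
  rIdeal {ugen q 2 0 0 + (q : ℂ) • ugen q 2 1 1 - ((q : ℂ) + 1) • (1 : SUq q 2),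
    ugen q 2 0 1 * ugen q 2 1 0, ugen q 2 0 1 * ugen q 2 0 1, ugen q 2 1 0 * ugen q 2 1 0,
    (ugen q 2 0 0 - (q : ℂ) • (1 : SUq q 2)) * ugen q 2 0 1,
    (ugen q 2 0 0 - (q : ℂ) • (1 : SUq q 2)) * ugen q 2 1 0}

noncomputable def woronowicz3DIdeal (q : ℝ) : Submodule ℂ (SUq q 2) :=
  rIdeal {ugen q 2 0 0 + ((q : ℂ)⁻¹) ^ 2 • ugen q 2 1 1 - (1 + ((q : ℂ)⁻¹) ^ 2) • (1 : SUq q 2),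
    ugen q 2 0 1 * ugen q 2 1 0, ugen q 2 0 1 * ugen q 2 0 1, ugen q 2 1 0 * ugen q 2 1 0,
    (ugen q 2 0 0 - 1) * ugen q 2 0 1, (ugen q 2 0 0 - 1) * ugen q 2 1 0}

theorem ugen_zero_one_notMem_su2CalculusIdeal {q : ℝ} (hq : q ≠ 0) :
    ugen q 2 0 1 ∉ su2CalculusIdeal q := by
  refine notMem_rIdeal_of_row_eq_zero
    ((SUq2Relations.diagonal q 1 hq one_ne_zero).liftAlgHom hq) 0 ?_
    (fun h => by simpa using congrFun h 1)
  have hq' : (q : ℂ) ≠ 0 := by exact_mod_cast hq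
  simp only [Set.mem_insert_iff, Set.mem_singleton_iff]
  rintro g (rfl | rfl | rfl | rfl | rfl | rfl) <;> ext j <;> fin_cases j <;>
    simp [Matrix.mul_apply, Fin.sum_univ_two, hq']

theorem ugen_zero_one_notMem_woronowicz3DIdeal {q : ℝ} (hq : q ≠ 0) :
    ugen q 2 0 1 ∉ woronowicz3DIdeal q := by
  refine notMem_rIdeal_of_row_eq_zero
    ((SUq2Relations.diagonal q q⁻¹ hq (inv_ne_zero hq)).liftAlgHom hq) 0 ?_
    (fun h => by simpa using congrFun h 1)
  have hq' : (q : ℂ) ≠ 0 := by exact_mod_cast hq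
  simp only [Set.mem_insert_iff, Set.mem_singleton_iff]
  rintro g (rfl | rfl | rfl | rfl | rfl | rfl) <;> ext j <;> fin_cases j <;>
    simp [Matrix.mul_apply, Fin.sum_univ_two, hq']

theorem su2CalculusIdeal_ne_woronowicz3DIdeal {q : ℝ} (hq0 : q ≠ 0) (hq1 : q ≠ 1) :
    su2CalculusIdeal q ≠ woronowicz3DIdeal q := by
  intro h
  refine ugen_zero_one_notMem_su2CalculusIdeal hq0
    (mem_of_sub_smul_one_mul_mem _ (s := (q : ℂ)) (t := 1) (by exact_mod_cast hq1)
      (x := ugen q 2 0 0) (subset_rIdeal _ (by simp)) ?_)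
  rw [h, one_smul]
  exact subset_rIdeal _ (by simp)

/-- The calculus `Ω¹_q(SU_2)` is not isomorphic to Woronowicz's 3D calculus: the right
ideal `I` of `ker ε` generated by `a + qd − (q+1), bc, b², c², (a−q)b, (a−q)c` is
distinct from the right ideal `I'` generated by
`a + q⁻²d − (1+q⁻²), bc, b², c², (a−1)b, (a−1)c`; indeed any right ideal containing
both `(a−q)b` and `(a−1)b` contains `b`, while neither `I` nor `I'` contains `b`
(for `q ≠ 1`). -/
theorem su2_calculus_not_3D (q : ℝ) (hq0 : 0 < q) (hq1 : q < 1) :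
    let a := ugen q 2 0 0
    let b := ugen q 2 0 1
    let c := ugen q 2 1 0
    let d := ugen q 2 1 1
    let I := rIdeal {a + (q : ℂ) • d - ((q : ℂ) + 1) • (1 : SUq q 2), b * c, b * b, c * c,
      (a - (q : ℂ) • (1 : SUq q 2)) * b, (a - (q : ℂ) • (1 : SUq q 2)) * c}
    let I' := rIdeal {a + ((q : ℂ)⁻¹)^2 • d - (1 + ((q : ℂ)⁻¹)^2) • (1 : SUq q 2), b * c,
      b * b, c * c, (a - 1) * b, (a - 1) * c}
    b ∉ I ∧ b ∉ I' ∧ I ≠ I' :=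
  ⟨ugen_zero_one_notMem_su2CalculusIdeal hq0.ne', ugen_zero_one_notMem_woronowicz3DIdeal hq0.ne',
    su2CalculusIdeal_ne_woronowicz3DIdeal hq0.ne' hq1.ne⟩
end
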